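/- arXiv:1708.09774 — 2 statements merged into one kernel-verified Lean document; each statement's English description precedes it below -/
import Mathlib

section
/- If G and H are non-trivial graphs with swap sets, then DD_m(G □ H) ≤ min{ DD_m(G) · |V(H)|, DD_m(H) · |V(G)| }. -/
/-!
A swap pair `(D, D')` of `G` lifts to the swap pair `(D × V(H), D' × V(H))` of `G □ H`: each
`G`-layer is dominated through the `G`-edges, and the matching is copied in every layer. Taking
`D` of minimum size gives `DD_m(G □ H) ≤ DD_m(G) · |V(H)|`, and the other bound follows from
`G □ H ≅ H □ G`, since swap pairs are transported by isomorphisms.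
-/

open SimpleGraph

variable {V : Type*}

/-- `D` is a dominating set of `G`. -/
def IsDomSet (G : SimpleGraph V) (D : Set V) : Prop :=
  ∀ v, v ∉ D → ∃ u ∈ D, G.Adj u v

/-- `D, D'` are disjoint dominating sets with a perfect matching between them
(each vertex of `D` matched to a distinct adjacent vertex of `D'`). -/
def IsSwapPair (G : SimpleGraph V) (D D' : Set V) : Prop :=
  IsDomSet G D ∧ IsDomSet G D' ∧ Disjoint D D' ∧
    ∃ f : D ≃ D', ∀ x : D, G.Adj x (f x)

/-- `DD_m(G)`: minimum cardinality of a swap set (`⊤` if none exists). -/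
noncomputable def DDm (G : SimpleGraph V) : ℕ∞ :=
  sInf {n : ℕ∞ | ∃ D D' : Set V, IsSwapPair G D D' ∧ (D.ncard : ℕ∞) = n}

/-- domination number -/
noncomputable def domNum (G : SimpleGraph V) : ℕ :=
  sInf {n : ℕ | ∃ D : Set V, IsDomSet G D ∧ D.ncard = n}

/-- independence number -/
noncomputable def indepNum (G : SimpleGraph V) : ℕ :=
  sSup {n : ℕ | ∃ I : Set V, (∀ a ∈ I, ∀ b ∈ I, ¬ G.Adj a b) ∧ I.ncard = n}

/-- a leaf: a vertex of degree one -/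
def IsLeaf (G : SimpleGraph V) (v : V) : Prop := (G.neighborSet v).ncard = 1

/-- a strong stem: a vertex adjacent to at least two leaves -/
def IsStrongStem (G : SimpleGraph V) (v : V) : Prop :=
  ∃ l₁ l₂, l₁ ≠ l₂ ∧ G.Adj v l₁ ∧ G.Adj v l₂ ∧ IsLeaf G l₁ ∧ IsLeaf G l₂

/-- a weak graph: no strong stems -/
def IsWeakGraph (G : SimpleGraph V) : Prop := ∀ v, ¬ IsStrongStem G v

/-- the set `S` induces a star (with some center `c`). -/
def IsStarSet (G : SimpleGraph V) (S : Set V) : Prop :=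
  ∃ c ∈ S, (∀ x ∈ S, x ≠ c → G.Adj c x) ∧
    ∀ x ∈ S, ∀ y ∈ S, x ≠ c → y ≠ c → ¬ G.Adj x y

/-- two parts are adjacent -/
def PartsAdj (G : SimpleGraph V) (A B : Set V) : Prop :=
  ∃ a ∈ A, ∃ b ∈ B, G.Adj a b

/-- A simple star partitioning of (the vertices of) `G`. -/
structure IsSSP (G : SimpleGraph V) (P : Finset (Set V)) : Prop where
  cover : ∀ v : V, ∃! S, S ∈ P ∧ v ∈ S
  star : ∀ S ∈ P, IsStarSet G S
  weakStem : ∀ v l, G.Adj v l → IsLeaf G l →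
    (∀ l', G.Adj v l' → IsLeaf G l' → l' = l) → ({v, l} : Set V) ∈ P
  k1 : ∀ S ∈ P, S.ncard = 1 → ∃ A ∈ P, ∃ B ∈ P, A ≠ B ∧
    A.ncard ≠ 1 ∧ B.ncard ≠ 1 ∧ PartsAdj G S A ∧ PartsAdj G S B

/-- weight of a star partitioning: a part of order `k` has weight `k-1`. -/
noncomputable def SSPweight (P : Finset (Set V)) : ℕ := ∑ S ∈ P, (S.ncard - 1)

/-- `S(G)`: minimum weight of a simple star partitioning. -/
noncomputable def starS (G : SimpleGraph V) : ℕ :=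
  sInf {w : ℕ | ∃ P : Finset (Set V), IsSSP G P ∧ SSPweight P = w}

/-- `W` is the vertex set of a weak reduction of `G`: all but one leaf
neighbor of each strong stem are removed. -/
def IsWeakReduction (G : SimpleGraph V) (W : Set V) : Prop :=
  (∀ v, v ∉ W → IsLeaf G v ∧ ∃ s, G.Adj s v ∧ IsStrongStem G s) ∧
  (∀ s, IsStrongStem G s → ∃! l, l ∈ W ∧ G.Adj s l ∧ IsLeaf G l)

namespace IsSwapPair

variable {V V' W : Type*} {G : SimpleGraph V} {D D' : Set V}

theorem image_iso {G' : SimpleGraph V'} (h : IsSwapPair G D D') (e : G ≃g G') :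
    IsSwapPair G' (e '' D) (e '' D') := by
  obtain ⟨hD, hD', hdisj, f, hf⟩ := h
  have dominates {S : Set V} (hS : IsDomSet G S) : IsDomSet G' (e '' S) := by
    intro v hv
    obtain ⟨u, hu, huv⟩ := hS (e.symm v) fun hmem => hv ⟨_, hmem, e.apply_symm_apply v⟩
    exact ⟨e u, Set.mem_image_of_mem e hu, by simpa using e.map_adj_iff.mpr huv⟩
  refine ⟨dominates hD, dominates hD', (Set.disjoint_image_iff e.injective).mpr hdisj,
    ((Equiv.Set.image e D e.injective).symm.trans
      (f.trans (Equiv.Set.image e D' e.injective))), fun x => ?_⟩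
  obtain ⟨y, rfl⟩ := (Equiv.Set.image e D e.injective).surjective x
  simpa using e.map_adj_iff.mpr (hf y)

theorem boxProd_left (h : IsSwapPair G D D') (H : SimpleGraph W) :
    IsSwapPair (G □ H) (D ×ˢ Set.univ) (D' ×ˢ Set.univ) := by
  obtain ⟨hD, hD', hdisj, f, hf⟩ := h
  have dominates {S : Set V} (hS : IsDomSet G S) : IsDomSet (G □ H) (S ×ˢ Set.univ) := by
    rintro ⟨a, b⟩ hab
    obtain ⟨u, hu, hua⟩ := hS a fun ha => hab ⟨ha, trivial⟩
    exact ⟨(u, b), ⟨hu, trivial⟩, boxProd_adj_left.mpr hua⟩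
  refine ⟨dominates hD, dominates hD', Set.disjoint_prod.mpr (Or.inl hdisj),
    (Equiv.Set.prod D Set.univ).trans
      ((f.prodCongr (Equiv.refl _)).trans (Equiv.Set.prod D' Set.univ).symm), ?_⟩
  rintro ⟨⟨a, b⟩, ha, -⟩
  exact boxProd_adj_left.mpr (hf ⟨a, ha⟩)

end IsSwapPair

section DDm

variable {V V' W : Type*} {G : SimpleGraph V}

theorem DDm_le_ncard {D D' : Set V} (h : IsSwapPair G D D') : DDm G ≤ D.ncard :=
  sInf_le ⟨D, D', h, rfl⟩

theorem exists_isSwapPair_ncard_eq_DDm (h : ∃ D D', IsSwapPair G D D') :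
    ∃ D D', IsSwapPair G D D' ∧ (D.ncard : ℕ∞) = DDm G := by
  obtain ⟨D, D', hD⟩ := h
  exact csInf_mem (s := {n : ℕ∞ | ∃ D D' : Set V, IsSwapPair G D D' ∧ (D.ncard : ℕ∞) = n})
    ⟨_, D, D', hD, rfl⟩

theorem DDm_le_of_iso {G' : SimpleGraph V'} (e : G ≃g G') : DDm G' ≤ DDm G := by
  refine le_sInf ?_
  rintro _ ⟨D, D', h, rfl⟩
  calc DDm G' ≤ (e '' D).ncard := DDm_le_ncard (h.image_iso e)
    _ = D.ncard := by rw [Set.ncard_image_of_injective D e.injective]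

theorem DDm_congr {G' : SimpleGraph V'} (e : G ≃g G') : DDm G = DDm G' :=
  le_antisymm (DDm_le_of_iso e.symm) (DDm_le_of_iso e)

theorem DDm_boxProd_le_left [Fintype W] (hG : ∃ D D', IsSwapPair G D D') (H : SimpleGraph W) :
    DDm (G □ H) ≤ DDm G * Fintype.card W := by
  obtain ⟨D, D', hD, hcard⟩ := exists_isSwapPair_ncard_eq_DDm hG
  calc DDm (G □ H) ≤ (D ×ˢ (Set.univ : Set W)).ncard := DDm_le_ncard (hD.boxProd_left H)
    _ = DDm G * Fintype.card W := by
      rw [Set.ncard_prod, Set.ncard_univ, Nat.card_eq_fintype_card, Nat.cast_mul, hcard]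

end DDm

theorem stmt_15_general {V W : Type*} [Fintype V] [Fintype W]
    (G : SimpleGraph V) (H : SimpleGraph W)
    (hG : ∃ D D', IsSwapPair G D D') (hH : ∃ D D', IsSwapPair H D D') :
    DDm (G.boxProd H) ≤
      min (DDm G * (Fintype.card W : ℕ∞)) (DDm H * (Fintype.card V : ℕ∞)) := by
  refine le_min (DDm_boxProd_le_left hG H) ?_
  rw [DDm_congr (boxProdComm G H)]
  exact DDm_boxProd_le_left hH G

theorem stmt_15 {V W : Type*} [Fintype V] [Fintype W]
    (G : SimpleGraph V) (H : SimpleGraph W)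
    (hV : 2 ≤ Fintype.card V) (hW : 2 ≤ Fintype.card W)
    (hG : ∃ D D', IsSwapPair G D D') (hH : ∃ D D', IsSwapPair H D D') :
    DDm (G.boxProd H) ≤
      min (DDm G * (Fintype.card W : ℕ∞)) (DDm H * (Fintype.card V : ℕ∞)) :=
  stmt_15_general G H hG hH
end

section
/- Let G be a connected graph with more than 3 vertices and independence number α(G) = 2. Then G contains a pair of disjoint dominating sets of size 2 each with a perfect matching between them; in particular DD_m(G) ≤ 2. -/
/-!
Since `α(G) = 2` there is a non-adjacent pair `{a, b}`, and every non-adjacent pair dominates `G`,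
since a vertex adjacent to neither would complete an independent triple. It remains to find
distinct `c ~ a`, `d ~ b` with `{c, d}` dominating. If two vertices `e, f` outside `{a, b}` are
non-adjacent, then `{e, f}` dominates, and forbidding independent triples among `a, b, e, f`
forces a perfect matching between `{a, b}` and `{e, f}`. Otherwise the vertices outside `{a, b}`
form a clique, so any such `c, d` outside `{a, b}` dominate; connectivity and `|V| ≥ 4` supply
them.
-/

open SimpleGraph

variable {V : Type*}

section

variable {G : SimpleGraph V}

lemma bddAbove_indepSizes [Finite V] :
    BddAbove {n | ∃ I : Set V, (∀ a ∈ I, ∀ b ∈ I, ¬ G.Adj a b) ∧ I.ncard = n} :=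
  ⟨Nat.card V, by rintro n ⟨I, -, rfl⟩; exact Set.ncard_le_card I⟩

lemma exists_indep_ncard_eq_indepNum [Finite V] :
    ∃ I : Set V, (∀ a ∈ I, ∀ b ∈ I, ¬ G.Adj a b) ∧ I.ncard = _root_.indepNum G :=
  Nat.sSup_mem (s := {n | ∃ I : Set V, (∀ a ∈ I, ∀ b ∈ I, ¬ G.Adj a b) ∧ I.ncard = n})
    ⟨0, ∅, by simp⟩ bddAbove_indepSizes

lemma ncard_le_indepNum [Finite V] {I : Set V} (hI : ∀ a ∈ I, ∀ b ∈ I, ¬ G.Adj a b) :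
    I.ncard ≤ _root_.indepNum G :=
  le_csSup bddAbove_indepSizes ⟨I, hI, rfl⟩

lemma exists_ne_not_adj_of_indepNum_eq_two [Finite V] (hα : _root_.indepNum G = 2) :
    ∃ a b, a ≠ b ∧ ¬ G.Adj a b := by
  obtain ⟨I, hI, hcard⟩ := exists_indep_ncard_eq_indepNum (G := G)
  obtain ⟨a, b, hab, rfl⟩ := Set.ncard_eq_two.mp (hcard.trans hα)
  exact ⟨a, b, hab, hI a (by simp) b (by simp)⟩

lemma adj_or_adj_or_adj_of_indepNum_le_two [Finite V] (hα : _root_.indepNum G ≤ 2) {x y z : V}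
    (hxy : x ≠ y) (hxz : x ≠ z) (hyz : y ≠ z) : G.Adj x y ∨ G.Adj x z ∨ G.Adj y z := by
  by_contra! h
  have hI : ∀ p ∈ ({x, y, z} : Set V), ∀ q ∈ ({x, y, z} : Set V), ¬ G.Adj p q := by
    rintro p (rfl | rfl | rfl) q (rfl | rfl | rfl) <;>
      grind [SimpleGraph.irrefl, SimpleGraph.adj_symm]
  have := ncard_le_indepNum hI
  rw [Set.ncard_eq_three.mpr ⟨x, y, z, hxy, hxz, hyz, rfl⟩] at this
  omega

lemma isDomSet_pair_of_not_adj [Finite V] (hα : _root_.indepNum G ≤ 2) {x y : V} (hxy : x ≠ y)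
    (h : ¬ G.Adj x y) : IsDomSet G {x, y} := by
  intro v hv
  simp only [Set.mem_insert_iff, Set.mem_singleton_iff, not_or] at hv
  simpa [h] using adj_or_adj_or_adj_of_indepNum_le_two hα hxy (Ne.symm hv.1) (Ne.symm hv.2)

lemma isSwapPair_pair {a b c d : V} (hab : a ≠ b) (hcd : c ≠ d) (hac : G.Adj a c)
    (hbd : G.Adj b d) (hdisj : Disjoint ({a, b} : Set V) {c, d}) (hD : IsDomSet G {a, b})
    (hD' : IsDomSet G {c, d}) :
    IsSwapPair G {a, b} {c, d} := by
  classical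
  let f : V → V := fun x => if x = a then c else d
  have hf : Set.BijOn f {a, b} {c, d} := by
    refine ⟨?_, ?_, ?_⟩
    · rintro x (rfl | rfl) <;> simp [f, hab.symm]
    · rintro x (rfl | rfl) y (rfl | rfl) <;> simp [f, hab, hab.symm, hcd, hcd.symm]
    · rintro y (rfl | rfl)
      · exact ⟨a, by simp, by simp [f]⟩
      · exact ⟨b, by simp, by simp [f, hab.symm]⟩
  refine ⟨hD, hD', hdisj, hf.equiv f, ?_⟩
  rintro ⟨x, rfl | rfl⟩ <;> simpa [Set.BijOn.equiv, f, hab.symm]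

lemma exists_ne_ne_ne_of_three_lt_card [Fintype V] (h : 3 < Fintype.card V) (a b c : V) :
    ∃ g, g ≠ a ∧ g ≠ b ∧ g ≠ c := by
  classical
  obtain ⟨g, -, hg⟩ := Finset.exists_mem_notMem_of_card_lt_card
    (s := {a, b, c}) (t := Finset.univ) (Finset.card_le_three.trans_lt h)
  exact ⟨g, by simpa [not_or] using hg⟩

lemma exists_matched_pair_of_not_adj [Finite V] (hα : _root_.indepNum G ≤ 2) {a b e f : V}
    (hab : a ≠ b) (hnab : ¬ G.Adj a b) (hef : e ≠ f) (hnef : ¬ G.Adj e f)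
    (hea : e ≠ a) (heb : e ≠ b) (hfa : f ≠ a) (hfb : f ≠ b) :
    ∃ c d, c ≠ d ∧ G.Adj a c ∧ G.Adj b d ∧ IsDomSet G {c, d} := by
  have he := adj_or_adj_or_adj_of_indepNum_le_two hα hab hea.symm heb.symm
  have hf := adj_or_adj_or_adj_of_indepNum_le_two hα hab hfa.symm hfb.symm
  have ha := adj_or_adj_or_adj_of_indepNum_le_two hα hef hea hfa
  have hb := adj_or_adj_or_adj_of_indepNum_le_two hα hef heb hfb
  have hdom := isDomSet_pair_of_not_adj hα hef hnef
  have hmatch : (G.Adj a e ∧ G.Adj b f) ∨ (G.Adj a f ∧ G.Adj b e) := by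
    simp only [hnab, hnef, false_or, G.adj_comm e a, G.adj_comm f a, G.adj_comm e b,
      G.adj_comm f b] at he hf ha hb
    tauto
  rcases hmatch with ⟨hae, hbf⟩ | ⟨haf, hbe⟩
  · exact ⟨e, f, hef, hae, hbf, hdom⟩
  · exact ⟨f, e, hef.symm, haf, hbe, Set.pair_comm e f ▸ hdom⟩

lemma exists_matched_pair_of_adj_outside [Fintype V] (hcard : 3 < Fintype.card V)
    (hα : _root_.indepNum G ≤ 2) {a b : V} (hab : a ≠ b) (hnab : ¬ G.Adj a b)
    (ha : ∃ c, G.Adj a c) (hb : ∃ d, G.Adj b d)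
    (hclique : ∀ x y, x ≠ y → x ≠ a → x ≠ b → y ≠ a → y ≠ b → G.Adj x y) :
    ∃ c d, c ≠ d ∧ G.Adj a c ∧ G.Adj b d ∧ IsDomSet G {c, d} := by
  have hdom : ∀ c d, G.Adj a c → G.Adj b d → IsDomSet G {c, d} := by
    intro c d hac hbd v hv
    simp only [Set.mem_insert_iff, Set.mem_singleton_iff, not_or] at hv
    by_cases hva : v = a
    · exact ⟨c, by simp, hva ▸ hac.symm⟩
    by_cases hvb : v = b
    · exact ⟨d, by simp, hvb ▸ hbd.symm⟩
    exact ⟨c, by simp,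
      hclique c v (Ne.symm hv.1) hac.ne.symm (fun h => hnab (h ▸ hac)) hva hvb⟩
  obtain ⟨c, hac⟩ := ha
  obtain ⟨d, hbd⟩ := hb
  by_cases hcd : c = d
  · subst hcd
    obtain ⟨g, hga, hgb, hgc⟩ := exists_ne_ne_ne_of_three_lt_card hcard a b c
    rcases adj_or_adj_or_adj_of_indepNum_le_two hα hab hga.symm hgb.symm with h | hag | hbg
    · exact absurd h hnab
    · exact ⟨g, c, hgc, hag, hbd, hdom g c hag hbd⟩
    · exact ⟨c, g, hgc.symm, hac, hbg, hdom c g hac hbg⟩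
  · exact ⟨c, d, hcd, hac, hbd, hdom c d hac hbd⟩

lemma exists_matched_dominating_pair [Fintype V] (hconn : G.Connected)
    (hcard : 3 < Fintype.card V) (hα : _root_.indepNum G ≤ 2) {a b : V} (hab : a ≠ b)
    (hnab : ¬ G.Adj a b) : ∃ c d, c ≠ d ∧ G.Adj a c ∧ G.Adj b d ∧ IsDomSet G {c, d} := by
  by_cases h : ∃ e f, e ≠ f ∧ e ≠ a ∧ e ≠ b ∧ f ≠ a ∧ f ≠ b ∧ ¬ G.Adj e f
  · obtain ⟨e, f, hef, hea, heb, hfa, hfb, hnef⟩ := h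
    exact exists_matched_pair_of_not_adj hα hab hnab hef hnef hea heb hfa hfb
  · push Not at h
    have : Nontrivial V := Fintype.one_lt_card_iff_nontrivial.mp (by omega)
    exact exists_matched_pair_of_adj_outside hcard hα hab hnab
      (hconn.preconnected.exists_adj_of_nontrivial a)
      (hconn.preconnected.exists_adj_of_nontrivial b) h

end

theorem stmt_17 {V : Type*} [Fintype V] (G : SimpleGraph V)
    (hconn : G.Connected) (hcard : 3 < Fintype.card V)
    (halpha : _root_.indepNum G = 2) :
    (∃ D D', IsSwapPair G D D' ∧ D.ncard = 2 ∧ D'.ncard = 2) ∧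
    DDm G ≤ 2 := by
  obtain ⟨a, b, hab, hnab⟩ := exists_ne_not_adj_of_indepNum_eq_two halpha
  obtain ⟨c, d, hcd, hac, hbd, hdom⟩ :=
    exists_matched_dominating_pair hconn hcard halpha.le hab hnab
  have hdisj : Disjoint ({a, b} : Set V) {c, d} := by
    rw [Set.disjoint_left]
    rintro x (rfl | rfl) (rfl | rfl)
    exacts [G.irrefl hac, hnab hbd.symm, hnab hac, G.irrefl hbd]
  have hswap : IsSwapPair G {a, b} {c, d} :=
    isSwapPair_pair hab hcd hac hbd hdisj (isDomSet_pair_of_not_adj halpha.le hab hnab) hdom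
  refine ⟨⟨_, _, hswap, Set.ncard_pair hab, Set.ncard_pair hcd⟩,
    sInf_le ⟨_, _, hswap, ?_⟩⟩
  rw [Set.ncard_pair hab]
  rfl
end
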